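/- arXiv:0810.1319 — 3 statements merged into one kernel-verified Lean document; each statement's English description precedes it below -/
import Mathlib

section
/- Let h_e be exponentially distributed with rate 1, let P > 0 and R₀ ≥ 0. Then 𝔼[(R₀ − log₂(1 + h_e P))⁺] = R₀ − (e^{1/P} / ln 2) · ( E₁(1/P) − E₁(2^{R₀}/P) ), where (x)⁺ = max(x, 0). -/
/-! Since `log₂ (1 + h P) ≥ 0`, the layer-cake formula gives
`𝔼[(R₀ - log₂ (1 + h P))⁺] = ∫₀^{R₀} Pr(log₂ (1 + h P) ≤ u) du`, and the exponential tail gives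
`Pr(log₂ (1 + h P) ≤ u) = Pr(h ≤ (2^u - 1) / P) = 1 - exp (-(2^u - 1) / P)`.
The substitution `s = 2^u / P`, `ds = s ln 2 du`, turns `∫₀^{R₀} exp (-(2^u - 1) / P) du` into
`(e^{1/P} / ln 2) ∫_{1/P}^{2^{R₀}/P} e^{-s} / s ds = (e^{1/P} / ln 2) (E₁(1/P) - E₁(2^{R₀}/P))`. -/

open MeasureTheory ProbabilityTheory Real Set

theorem integrableOn_exp_neg_div_self_Ioi {a : ℝ} (ha : 0 < a) :
    IntegrableOn (fun s => exp (-s) / s) (Ioi a) := by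
  have hmeas : Measurable fun s : ℝ => exp (-s) / s := by fun_prop
  refine ((exp_neg_integrableOn_Ioi a one_pos).div_const a).mono' hmeas.aestronglyMeasurable ?_
  filter_upwards [ae_restrict_mem measurableSet_Ioi] with s (hs : a < s)
  rw [norm_of_nonneg (div_nonneg (exp_pos _).le (ha.trans hs).le), neg_one_mul]
  gcongr

theorem integral_comp_rpow_div {b κ : ℝ} (R : ℝ) (hb : 0 < b) (hb1 : b ≠ 1) (hκ : 0 < κ)
    {F : ℝ → ℝ} (hF : ContinuousOn F (Ioi 0)) :
    ∫ u in (0 : ℝ)..R, F (b ^ u / κ) = (log b)⁻¹ * ∫ s in 1 / κ..b ^ R / κ, F s / s := by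
  have hlog : log b ≠ 0 := log_ne_zero_of_pos_of_ne_one hb hb1
  have hderiv : ∀ u ∈ uIcc 0 R, HasDerivAt (fun u => b ^ u / κ) (b ^ u * log b / κ) u :=
    fun u _ => (hasStrictDerivAt_const_rpow hb u).hasDerivAt.div_const κ
  have hpos : ∀ u : ℝ, 0 < b ^ u / κ := fun u => div_pos (rpow_pos_of_pos hb u) hκ
  have hcont : ContinuousOn (fun s => F s / s) ((fun u => b ^ u / κ) '' uIcc 0 R) := by
    rintro _ ⟨u, -, rfl⟩
    exact ((hF _ (hpos u)).div continuousWithinAt_id (hpos u).ne').mono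
      (by rintro _ ⟨v, -, rfl⟩; exact hpos v)
  have hcont_deriv : Continuous fun u : ℝ => b ^ u * log b / κ :=
    ((continuous_const.rpow continuous_id fun _ => Or.inl hb.ne').mul_const _).div_const _
  have hsubst := intervalIntegral.integral_comp_mul_deriv' hderiv hcont_deriv.continuousOn hcont
  simp only [rpow_zero] at hsubst
  rw [← hsubst, ← intervalIntegral.integral_const_mul]
  refine intervalIntegral.integral_congr fun u _ => ?_
  have hbu : b ^ u ≠ 0 := (rpow_pos_of_pos hb u).ne'
  simp only [Function.comp]
  field_simp

theorem integral_one_sub_exp_neg_rpow_sub_one_div {b P : ℝ} (R : ℝ) (hb : 0 < b) (hb1 : b ≠ 1)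
    (hP : 0 < P) :
    ∫ u in (0 : ℝ)..R, (1 - exp (-((b ^ u - 1) / P)))
      = R - exp (1 / P) / log b * ∫ s in 1 / P..b ^ R / P, exp (-s) / s := by
  have hsplit : ∀ u : ℝ, exp (-((b ^ u - 1) / P)) = exp (1 / P) * exp (-(b ^ u / P)) := by
    intro u
    rw [← exp_add]
    ring_nf
  have hcont : Continuous fun u : ℝ => exp (-(b ^ u / P)) :=
    ((continuous_const.rpow continuous_id fun _ => Or.inl hb.ne').div_const _).neg.rexp
  simp_rw [hsplit]
  rw [intervalIntegral.integral_sub intervalIntegrable_const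
      ((hcont.intervalIntegrable _ _).const_mul _), intervalIntegral.integral_const_mul,
    integral_comp_rpow_div R hb hb1 hP (continuous_neg.rexp.continuousOn)]
  simp only [intervalIntegral.integral_const, sub_zero, smul_eq_mul, mul_one]
  ring

theorem integral_max_sub_zero_eq_intervalIntegral_measureReal_le {Ω : Type*} [MeasurableSpace Ω]
    {μ : Measure Ω} [IsFiniteMeasure μ] {Y : Ω → ℝ} (hY : Measurable Y) (hY0 : ∀ᵐ ω ∂μ, 0 ≤ Y ω)
    {R : ℝ} (hR : 0 ≤ R) :
    ∫ ω, max (R - Y ω) 0 ∂μ = ∫ u in (0 : ℝ)..R, μ.real {ω | Y ω ≤ u} := by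
  have hbdd : (fun ω => max (R - Y ω) 0) ≤ᵐ[μ] fun _ => R := by
    filter_upwards [hY0] with ω hω using max_le (by linarith) hR
  have hint : Integrable (fun ω => max (R - Y ω) 0) μ :=
    (integrable_const R).mono' (by fun_prop) <| by
      filter_upwards [hbdd] with ω hω
      rwa [norm_of_nonneg (le_max_right _ _)]
  have hlevel : ∀ t ∈ Ioc 0 R,
      μ.real {ω | t ≤ max (R - Y ω) 0} = μ.real {ω | Y ω ≤ R - t} := by
    rintro t ⟨ht, -⟩
    congr 1
    ext ω
    simp only [mem_ofPred_eq, le_max_iff, not_le.2 ht, or_false]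
    constructor <;> intro <;> linarith
  rw [hint.integral_eq_integral_Ioc_meas_le (ae_of_all _ fun _ => le_max_right _ _) hbdd,
    setIntegral_congr_fun measurableSet_Ioc hlevel, ← intervalIntegral.integral_of_le hR,
    intervalIntegral.integral_comp_sub_left (fun u => μ.real {ω | Y ω ≤ u}), sub_self, sub_zero]

theorem measureReal_le_eq_one_sub_of_measure_gt {Ω : Type*} [MeasurableSpace Ω]
    {μ : Measure Ω} [IsProbabilityMeasure μ] {X : Ω → ℝ} (hX : Measurable X) {x p : ℝ}
    (hp : 0 ≤ p) (htail : μ {ω | X ω > x} = ENNReal.ofReal p) :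
    μ.real {ω | X ω ≤ x} = 1 - p := by
  have : {ω | X ω ≤ x} = {ω | X ω > x}ᶜ := by ext; simp
  rw [this, probReal_compl_eq_one_sub (measurableSet_lt measurable_const hX), measureReal_def,
    htail, ENNReal.toReal_ofReal hp]

theorem logb_one_add_mul_le_iff {b h P u : ℝ} (hb : 1 < b) (hP : 0 < P) (hh : 0 ≤ h) :
    logb b (1 + h * P) ≤ u ↔ h ≤ (b ^ u - 1) / P := by
  rw [logb_le_iff_le_rpow hb (by positivity), le_div_iff₀ hP]
  constructor <;> intro <;> linarith

/-- With unit-rate exponential fading `h_e`, power `P > 0` and rate `R₀ ≥ 0`,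
`𝔼[(R₀ - log₂(1 + h_e P))⁺] = R₀ - (e^{1/P} / ln 2) · (E₁(1/P) - E₁(2^{R₀}/P))`,
where `E₁(x) = ∫ₓ^∞ e^{-t}/t dt` is the exponential integral. -/
theorem stmt_7 {Ω : Type*} [MeasureSpace Ω] [IsProbabilityMeasure (ℙ : Measure Ω)]
    (he : Ω → ℝ) (hmeas : Measurable he)
    (hexp : ∀ x : ℝ, 0 ≤ x → ℙ {ω | he ω > x} = ENNReal.ofReal (Real.exp (-x)))
    (P R₀ : ℝ) (hP : 0 < P) (hR₀ : 0 ≤ R₀) :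
    ∫ ω, max (R₀ - Real.logb 2 (1 + he ω * P)) 0 ∂ℙ
      = R₀ - (Real.exp (1 / P) / Real.log 2) *
          ((∫ s in Set.Ioi (1 / P), Real.exp (-s) / s)
            - ∫ s in Set.Ioi ((2 : ℝ) ^ R₀ / P), Real.exp (-s) / s) := by
  have hnonneg : ∀ᵐ ω ∂ℙ, 0 ≤ he ω := by
    refine ((ae_iff_measure_eq (measurableSet_lt measurable_const hmeas).nullMeasurableSet).2
      ?_).mono fun _ h => le_of_lt h
    simpa using hexp 0 le_rfl
  have hcdf : ∀ u ∈ uIcc 0 R₀, (ℙ : Measure Ω).real {ω | logb 2 (1 + he ω * P) ≤ u}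
      = 1 - exp (-((2 ^ u - 1) / P)) := by
    intro u hu
    rw [uIcc_of_le hR₀] at hu
    have hthreshold : 0 ≤ ((2 : ℝ) ^ u - 1) / P :=
      div_nonneg (sub_nonneg.2 (one_le_rpow one_le_two hu.1)) hP.le
    rw [← measureReal_le_eq_one_sub_of_measure_gt hmeas (exp_pos _).le (hexp _ hthreshold)]
    refine measureReal_congr (hnonneg.mono fun ω hω => ?_)
    exact propext (logb_one_add_mul_le_iff one_lt_two hP hω)
  have hlogb : ∀ᵐ ω ∂ℙ, 0 ≤ logb 2 (1 + he ω * P) :=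
    hnonneg.mono fun ω hω => logb_nonneg one_lt_two (by nlinarith)
  have hmeas_logb : Measurable fun ω => logb 2 (1 + he ω * P) :=
    (measurable_log.comp (by fun_prop)).div_const _
  rw [integral_max_sub_zero_eq_intervalIntegral_measureReal_le hmeas_logb hlogb hR₀,
    intervalIntegral.integral_congr hcdf,
    integral_one_sub_exp_neg_rpow_sub_one_div R₀ two_pos (by norm_num) hP,
    intervalIntegral.integral_Ioi_sub_Ioi (integrableOn_exp_neg_div_self_Ioi (by positivity))
      (div_le_div_of_nonneg_right (one_le_rpow one_le_two hR₀) hP.le)]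
end

section
/- Let h_b and h_e be independent random variables, exponentially distributed with rates λ_b > 0 and λ_e > 0 respectively (in particular, the eavesdropper may have arbitrarily larger average SNR than the legitimate receiver, i.e., 1/λ_e may exceed 1/λ_b). Then for every transmit power P > 0 and every rate R₀ > 0, the secrecy-rate objective is strictly positive: Pr(R₀ ≤ log₂(1 + h_b P)) · 𝔼[(R₀ − log₂(1 + h_e P))⁺] > 0. -/
open MeasureTheory ProbabilityTheory Real

/-! Both factors are positive separately. With the threshold `x = (2 ^ R₀ - 1) / P`, the event
`R₀ ≤ log₂(1 + h_b P)` contains `h_b > x`, which has probability `exp (-λ_b x) > 0`. The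
integrand `(R₀ - log₂(1 + h_e P))⁺` is nonnegative and bounded by `R₀` (as `h_e > 0` a.s.), and
it is positive on `0 < h_e ≤ x / 2`, an event of probability `1 - exp (-λ_e x / 2) > 0`. -/

lemma le_logb_one_add_mul_iff {b P R y : ℝ} (hb : 1 < b) (hP : 0 < P) (hy : 0 ≤ y) :
    R ≤ logb b (1 + y * P) ↔ (b ^ R - 1) / P ≤ y := by
  rw [le_logb_iff_rpow_le hb (by positivity), div_le_iff₀ hP]
  constructor <;> intro h <;> linarith

lemma rpow_sub_one_div_pos {b P R : ℝ} (hb : 1 < b) (hP : 0 < P) (hR : 0 < R) :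
    0 < (b ^ R - 1) / P :=
  div_pos (sub_pos.2 (one_lt_rpow hb hR)) hP

section ExponentialTail

variable {Ω : Type*} [MeasurableSpace Ω] {μ : Measure Ω} {X : Ω → ℝ} {r : ℝ}

lemma measure_gt_pos_of_exp_tail
    (hX : ∀ x : ℝ, 0 ≤ x → μ {ω | X ω > x} = ENNReal.ofReal (exp (-(r * x))))
    {x : ℝ} (hx : 0 ≤ x) : 0 < μ {ω | X ω > x} := by
  rw [hX x hx]
  exact ENNReal.ofReal_pos.2 (exp_pos _)

lemma measure_gt_zero_of_exp_tail
    (hX : ∀ x : ℝ, 0 ≤ x → μ {ω | X ω > x} = ENNReal.ofReal (exp (-(r * x)))) :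
    μ {ω | X ω > 0} = 1 := by
  simp [hX 0 le_rfl]

lemma ae_pos_of_exp_tail [IsProbabilityMeasure μ] (hXm : Measurable X)
    (hX : ∀ x : ℝ, 0 ≤ x → μ {ω | X ω > x} = ENNReal.ofReal (exp (-(r * x)))) :
    ∀ᵐ ω ∂μ, 0 < X ω :=
  (ae_iff_measure_eq (measurableSet_lt measurable_const hXm).nullMeasurableSet).2
    (by rw [measure_univ]; exact measure_gt_zero_of_exp_tail hX)

lemma measure_Ioc_pos_of_exp_tail [IsProbabilityMeasure μ] (hXm : Measurable X) (hr : 0 < r)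
    (hX : ∀ x : ℝ, 0 ≤ x → μ {ω | X ω > x} = ENNReal.ofReal (exp (-(r * x))))
    {x : ℝ} (hx : 0 < x) : 0 < μ {ω | 0 < X ω ∧ X ω ≤ x} := by
  have hdiff : {ω | 0 < X ω ∧ X ω ≤ x} = {ω | X ω > 0} \ {ω | X ω > x} := by
    ext ω
    simp only [Set.mem_ofPred_eq, Set.mem_sdiff, not_lt, gt_iff_lt]
  have htail : μ {ω | X ω > x} < 1 := by
    rw [hX x hx.le, ← ENNReal.ofReal_one, ENNReal.ofReal_lt_ofReal_iff one_pos, exp_lt_one_iff]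
    nlinarith
  have hsub : {ω | X ω > x} ⊆ {ω | X ω > 0} := fun ω (hω : x < X ω) => hx.trans hω
  rw [hdiff, measure_sdiff hsub (measurableSet_lt measurable_const hXm).nullMeasurableSet
      (measure_ne_top _ _), measure_gt_zero_of_exp_tail hX]
  exact tsub_pos_of_lt htail

end ExponentialTail

lemma integral_max_sub_logb_pos {Ω : Type*} [MeasurableSpace Ω] {μ : Measure Ω}
    [IsFiniteMeasure μ] {X : Ω → ℝ} (hXm : Measurable X) (hX : ∀ᵐ ω ∂μ, 0 ≤ X ω)
    {b P R x : ℝ} (hb : 1 < b) (hP : 0 < P) (hR : 0 ≤ R) (hx : x < (b ^ R - 1) / P)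
    (hsmall : 0 < μ {ω | 0 < X ω ∧ X ω ≤ x}) :
    0 < ∫ ω, max (R - logb b (1 + X ω * P)) 0 ∂μ := by
  have hnonneg : 0 ≤ᵐ[μ] fun ω => max (R - logb b (1 + X ω * P)) 0 :=
    Filter.Eventually.of_forall fun _ => le_max_right _ _
  have hint : Integrable (fun ω => max (R - logb b (1 + X ω * P)) 0) μ := by
    refine (integrable_const R).mono'
      ((measurable_const.sub (((hXm.mul_const P).const_add 1).log.div_const _)).max
        measurable_const).aestronglyMeasurable ?_
    filter_upwards [hX] with ω hω
    have hlog : 0 ≤ logb b (1 + X ω * P) := logb_nonneg hb (by nlinarith)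
    rw [norm_of_nonneg (le_max_right _ _)]
    exact max_le (by linarith) hR
  rw [integral_pos_iff_support_of_nonneg_ae hnonneg hint]
  refine hsmall.trans_le (measure_mono fun ω ⟨hpos, hle⟩ => ?_)
  have hlt : logb b (1 + X ω * P) < R :=
    lt_of_not_ge fun h => ((le_logb_one_add_mul_iff hb hP hpos.le).1 h).not_gt (hle.trans_lt hx)
  exact (lt_max_of_lt_left (sub_pos.2 hlt)).ne'

theorem stmt_9_general {Ω : Type*} [MeasureSpace Ω] [IsProbabilityMeasure (ℙ : Measure Ω)]
    (hb he : Ω → ℝ) (hemeas : Measurable he)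
    (lb le : ℝ) (hle : 0 < le)
    (hbexp : ∀ x : ℝ, 0 ≤ x → ℙ {ω | hb ω > x} = ENNReal.ofReal (Real.exp (-(lb * x))))
    (heexp : ∀ x : ℝ, 0 ≤ x → ℙ {ω | he ω > x} = ENNReal.ofReal (Real.exp (-(le * x))))
    (P R₀ : ℝ) (hP : 0 < P) (hR₀ : 0 < R₀) :
    0 < (ℙ {ω | R₀ ≤ Real.logb 2 (1 + hb ω * P)}).toReal
        * ∫ ω, max (R₀ - Real.logb 2 (1 + he ω * P)) 0 ∂ℙ := by
  set x := ((2 : ℝ) ^ R₀ - 1) / P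
  have hx : 0 < x := rpow_sub_one_div_pos one_lt_two hP hR₀
  have hbgood : 0 < ℙ {ω | R₀ ≤ logb 2 (1 + hb ω * P)} :=
    (measure_gt_pos_of_exp_tail hbexp hx.le).trans_le <| measure_mono fun ω (hω : x < hb ω) =>
      (le_logb_one_add_mul_iff one_lt_two hP (hx.trans hω).le).2 hω.le
  have hegood : 0 < ∫ ω, max (R₀ - logb 2 (1 + he ω * P)) 0 ∂ℙ :=
    integral_max_sub_logb_pos hemeas
      ((ae_pos_of_exp_tail hemeas heexp).mono fun _ h => h.le) one_lt_two hP hR₀.le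
      (half_lt_self hx)
      (measure_Ioc_pos_of_exp_tail hemeas hle heexp (half_pos hx))
  exact mul_pos (ENNReal.toReal_pos hbgood.ne' (measure_ne_top _ _)) hegood

/-- For independent exponential fading gains `h_b`, `h_e` with arbitrary rates
`λ_b, λ_e > 0` (so the eavesdropper may enjoy an arbitrarily larger average SNR), every power
`P > 0` and every rate `R₀ > 0`, the secrecy-rate objective is strictly positive:
`Pr(R₀ ≤ log₂(1 + h_b P)) · 𝔼[(R₀ - log₂(1 + h_e P))⁺] > 0`. -/
theorem stmt_9 {Ω : Type*} [MeasureSpace Ω] [IsProbabilityMeasure (ℙ : Measure Ω)]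
    (hb he : Ω → ℝ) (hbmeas : Measurable hb) (hemeas : Measurable he)
    (hindep : IndepFun hb he ℙ)
    (lb le : ℝ) (hlb : 0 < lb) (hle : 0 < le)
    (hbexp : ∀ x : ℝ, 0 ≤ x → ℙ {ω | hb ω > x} = ENNReal.ofReal (Real.exp (-(lb * x))))
    (heexp : ∀ x : ℝ, 0 ≤ x → ℙ {ω | he ω > x} = ENNReal.ofReal (Real.exp (-(le * x))))
    (P R₀ : ℝ) (hP : 0 < P) (hR₀ : 0 < R₀) :
    0 < (ℙ {ω | R₀ ≤ Real.logb 2 (1 + hb ω * P)}).toReal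
        * ∫ ω, max (R₀ - Real.logb 2 (1 + he ω * P)) 0 ∂ℙ :=
  stmt_9_general hb he hemeas lb le hle hbexp heexp P R₀ hP hR₀
end

section
/- Fix k ≥ 1 and P > 0, and define the key rate R_k(R₀) = (R₀/k)·exp(−(2^{R₀} − 1)/P) for R₀ ≥ 0. Then R_k has a unique global maximizer R₀* ∈ (0, ∞), characterized as the unique positive solution of R₀· 2^{R₀} · ln 2 = P; moreover R_k is strictly increasing on [0, R₀*] and strictly decreasing on [R₀*, ∞). -/
/-!
With `g x = x · 2^x · ln 2`, the derivative of the key rate is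
`R_k'(x) = exp(-(2^x - 1)/P) / (k P) · (P - g x)`. Since `g` is strictly increasing on `[0, ∞)`
with `g 0 = 0 < P` and `g x → ∞`, it crosses the level `P` exactly once, at `R₀*`; so `R_k'` is
positive on `(0, R₀*)` and negative on `(R₀*, ∞)`.
-/

open Real Set

lemma strictMonoOn_mul_rpow_mul_log {b : ℝ} (hb : 1 < b) :
    StrictMonoOn (fun x : ℝ => x * b ^ x * log b) (Ici 0) := by
  intro x hx y _ hxy
  have hpow : b ^ x < b ^ y := rpow_lt_rpow_of_exponent_lt hb hxy
  exact mul_lt_mul_of_pos_right (mul_lt_mul'' hxy hpow hx (by positivity)) (log_pos hb)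

lemma existsUnique_pos_mul_rpow_mul_log_eq {b P : ℝ} (hb : 1 < b) (hP : 0 < P) :
    ∃! R : ℝ, 0 < R ∧ R * b ^ R * log b = P := by
  set g : ℝ → ℝ := fun x => x * b ^ x * log b
  have hlog : 0 < log b := log_pos hb
  have hcont : Continuous g :=
    (continuous_id.mul (continuous_const_rpow (by positivity))).mul continuous_const
  set M := max 1 (P / log b)
  have hM : 1 ≤ M := le_max_left _ _
  have hPM : P ≤ g M :=
    calc P = P / log b * log b := (div_mul_cancel₀ P hlog.ne').symm
      _ ≤ M * b ^ M * log b := by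
        gcongr
        exact (le_max_right _ _).trans (le_mul_of_one_le_right (by positivity)
          (one_le_rpow hb.le (by positivity)))
  obtain ⟨R, hR, hgR⟩ := intermediate_value_Icc (zero_le_one.trans hM) hcont.continuousOn
    (⟨by simp [g, hP.le], hPM⟩ : P ∈ Icc (g 0) (g M))
  have hRpos : 0 < R := hR.1.lt_of_ne <| by
    rintro rfl
    simp [g] at hgR
    linarith
  refine ⟨R, ⟨hRpos, hgR⟩, fun y ⟨hy, hgy⟩ => ?_⟩
  exact (strictMonoOn_mul_rpow_mul_log hb).injOn hy.le hRpos.le (hgy.trans hgR.symm)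

noncomputable def keyRate (k P R₀ : ℝ) : ℝ := R₀ / k * exp (-((2 ^ R₀ - 1) / P))

lemma hasDerivAt_keyRate (k : ℝ) {P : ℝ} (hP : P ≠ 0) (x : ℝ) :
    HasDerivAt (keyRate k P)
      (exp (-((2 ^ x - 1) / P)) / (k * P) * (P - x * 2 ^ x * log 2)) x := by
  have hpow : HasDerivAt (fun y : ℝ => (2 : ℝ) ^ y) (2 ^ x * log 2) x :=
    (hasStrictDerivAt_const_rpow two_pos x).hasDerivAt
  have h : HasDerivAt (keyRate k P)
      (1 / k * exp (-((2 ^ x - 1) / P)) + x / k * (exp (-((2 ^ x - 1) / P)) * -(2 ^ x * log 2 / P)))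
      x :=
    ((hasDerivAt_id' x).div_const k).mul ((hpow.sub_const 1).div_const P).neg.exp
  convert h using 1
  field_simp
  ring

lemma continuous_keyRate (k P : ℝ) : Continuous (keyRate k P) :=
  (continuous_id.div_const k).mul
    ((((continuous_const_rpow two_ne_zero).sub continuous_const).div_const P).neg.rexp)

section Monotonicity

variable {k P R : ℝ} (hk : 0 < k) (hP : 0 < P) (hRP : R * 2 ^ R * log 2 = P)
include hk hP hRP

lemma strictMonoOn_keyRate : StrictMonoOn (keyRate k P) (Icc 0 R) := by
  refine strictMonoOn_of_deriv_pos (convex_Icc 0 R) (continuous_keyRate k P).continuousOn ?_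
  intro x hx
  rw [interior_Icc] at hx
  obtain ⟨hx, hxR⟩ := hx
  have hgx : x * 2 ^ x * log 2 < P :=
    hRP ▸ strictMonoOn_mul_rpow_mul_log one_lt_two hx.le (hx.trans hxR).le hxR
  rw [(hasDerivAt_keyRate k hP.ne' x).deriv]
  exact mul_pos (by positivity) (sub_pos.2 hgx)

lemma strictAntiOn_keyRate (hR : 0 ≤ R) : StrictAntiOn (keyRate k P) (Ici R) := by
  refine strictAntiOn_of_deriv_neg (convex_Ici R) (continuous_keyRate k P).continuousOn ?_
  intro x hRx
  rw [interior_Ici, mem_Ioi] at hRx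
  have hgx : P < x * 2 ^ x * log 2 :=
    hRP ▸ strictMonoOn_mul_rpow_mul_log one_lt_two hR (hR.trans hRx.le) hRx
  rw [(hasDerivAt_keyRate k hP.ne' x).deriv]
  exact mul_neg_of_pos_of_neg (by positivity) (sub_neg.2 hgx)

end Monotonicity

lemma lt_of_strictMonoOn_Icc_of_strictAntiOn_Ici {α β : Type*} [LinearOrder α] [Preorder β]
    {f : α → β} {a c x : α} (hmono : StrictMonoOn f (Icc a c)) (hanti : StrictAntiOn f (Ici c))
    (hac : a ≤ c) (hx : a ≤ x) (hxc : x ≠ c) : f x < f c := by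
  rcases hxc.lt_or_gt with hlt | hgt
  · exact hmono ⟨hx, hlt.le⟩ ⟨hac, le_rfl⟩ hlt
  · exact hanti (mem_Ici.2 le_rfl) hgt.le hgt

/-- Fix `k ≥ 1` and `P > 0` and let `R_k(R₀) = (R₀/k) · exp (-(2^{R₀}-1)/P)`.
Then `R_k` has a unique global maximizer `R₀* ∈ (0, ∞)`, characterized as the unique positive
solution of `R₀ · 2^{R₀} · ln 2 = P`; moreover `R_k` is strictly increasing on `[0, R₀*]` and
strictly decreasing on `[R₀*, ∞)`. -/
theorem stmt_13 (k : ℕ) (hk : 1 ≤ k) (P : ℝ) (hP : 0 < P)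
    (Rk : ℝ → ℝ)
    (hRk : Rk = fun R₀ : ℝ =>
      (R₀ / (k : ℝ)) * Real.exp (-(((2 : ℝ) ^ R₀ - 1) / P))) :
    ∃ R₀star : ℝ, 0 < R₀star ∧
      R₀star * (2 : ℝ) ^ R₀star * Real.log 2 = P ∧
      (∀ x : ℝ, 0 < x → x * (2 : ℝ) ^ x * Real.log 2 = P → x = R₀star) ∧
      StrictMonoOn Rk (Set.Icc 0 R₀star) ∧
      StrictAntiOn Rk (Set.Ici R₀star) ∧
      (∀ x ∈ Set.Ici (0 : ℝ), Rk x ≤ Rk R₀star) ∧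
      (∀ x ∈ Set.Ici (0 : ℝ), x ≠ R₀star → Rk x < Rk R₀star) := by
  obtain rfl : Rk = keyRate k P := hRk
  obtain ⟨R, ⟨hR, hRP⟩, huniq⟩ := existsUnique_pos_mul_rpow_mul_log_eq one_lt_two hP
  have hk0 : (0 : ℝ) < k := by exact_mod_cast hk
  have hmono := strictMonoOn_keyRate hk0 hP hRP
  have hanti := strictAntiOn_keyRate hk0 hP hRP hR.le
  have hmax (x : ℝ) (hx : x ∈ Ici (0 : ℝ)) (hxR : x ≠ R) : keyRate k P x < keyRate k P R :=
    lt_of_strictMonoOn_Icc_of_strictAntiOn_Ici hmono hanti hR.le hx hxR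
  refine ⟨R, hR, hRP, fun x hx hxP => huniq x ⟨hx, hxP⟩, hmono, hanti, fun x hx => ?_, hmax⟩
  rcases eq_or_ne x R with rfl | hxR
  · exact le_rfl
  · exact (hmax x hx hxR).le
end
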